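/- Let F be a number field with odd class number h(F), let 𝔭₁ and 𝔭₂ be primary prime ideals of odd norm, write 𝔭₂^{h(F)} = (π₂) with π₂ primary and set k₂ = F(√π₂) with unit group E₂. Suppose 𝔭₁ splits in k₂ as 𝔭₁O_{k₂} = 𝔓₁𝔓₁'. Then (E₂/𝔓₁) = (E₂/𝔓₁'), i.e. every unit of k₂ is a quadratic residue modulo 𝔓₁ if and only if every unit of k₂ is a quadratic residue modulo 𝔓₁'. -/

import Mathlib

open NumberField
open scoped Classical

/-- The quadratic residue symbol `[α/𝔭] ∈ {±1}`, determined by Euler's congruence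
`[α/𝔭] ≡ α^((N𝔭 - 1)/2) (mod 𝔭)`. -/
noncomputable def quadResSym (F : Type*) [Field F] [NumberField F]
    (𝔭 : Ideal (𝓞 F)) (α : 𝓞 F) : ℤ :=
  if α ^ ((Ideal.absNorm 𝔭 - 1) / 2) - 1 ∈ 𝔭 then 1 else -1

/-- An ideal `𝔭` is primary if `[ε/𝔭] = 1` for every unit `ε`, i.e. `(E_F/𝔭) = +1`. -/
def IsPrimaryIdeal (F : Type*) [Field F] [NumberField F] (𝔭 : Ideal (𝓞 F)) : Prop :=
  ∀ ε : (𝓞 F)ˣ, quadResSym F 𝔭 (ε : 𝓞 F) = 1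

/-- An element of the ring of integers is primary if it is totally positive and
congruent to a square modulo 4. -/
def IsPrimaryElem (F : Type*) [Field F] [NumberField F] (α : 𝓞 F) : Prop :=
  (∀ φ : F →+* ℝ, 0 < φ (algebraMap (𝓞 F) F α)) ∧ ∃ ξ : 𝓞 F, (4 : 𝓞 F) ∣ α - ξ ^ 2

/-! The quadratic extension `k₂/F` is Galois, and its Galois group acts transitively on the
primes of `k₂` above `𝔭₁`, so some automorphism `σ` of `𝓞 k₂` maps `𝔓₁` to `𝔓₁'`. The residue
symbol is transported by ring isomorphisms, `[σ ε / σ 𝔓₁] = [ε / 𝔓₁]`, and `σ` permutes the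
units, so the two unit symbols agree. -/

theorem Ideal.absNorm_map_ringEquiv {R S : Type*} [CommRing R] [IsDedekindDomain R]
    [Module.Free ℤ R] [CommRing S] [IsDedekindDomain S] [Module.Free ℤ S]
    (e : R ≃+* S) (I : Ideal R) : absNorm (I.map e) = absNorm I := by
  rw [absNorm_apply, absNorm_apply, Submodule.cardQuot_apply, Submodule.cardQuot_apply]
  exact (Nat.card_congr (quotientEquiv I (I.map e) e rfl).toEquiv).symm

theorem Ideal.liesOver_of_map_le {A B : Type*} [CommRing A] [CommRing B] [Algebra A B]
    {p : Ideal A} [p.IsMaximal] {P : Ideal B} [P.IsPrime]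
    (h : p.map (algebraMap A B) ≤ P) : P.LiesOver p :=
  ⟨‹p.IsMaximal›.eq_of_le (IsPrime.under A P).ne_top (map_le_iff_le_comap.mp h)⟩

section quadResSym

variable {K L : Type*} [Field K] [NumberField K] [Field L] [NumberField L]

theorem quadResSym_map_ringEquiv (e : 𝓞 K ≃+* 𝓞 L) (P : Ideal (𝓞 K)) (α : 𝓞 K) :
    quadResSym L (P.map e) (e α) = quadResSym K P α := by
  simp only [quadResSym, Ideal.absNorm_map_ringEquiv, ← map_pow, ← map_one e, ← map_sub,
    Ideal.apply_mem_of_equiv_iff]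

theorem forall_units_quadResSym_map_ringEquiv_iff (e : 𝓞 K ≃+* 𝓞 L) (P : Ideal (𝓞 K)) :
    (∀ ε : (𝓞 L)ˣ, quadResSym L (P.map e) ε = 1) ↔ ∀ ε : (𝓞 K)ˣ, quadResSym K P ε = 1 := by
  rw [← (Units.mapEquiv (e : 𝓞 K ≃* 𝓞 L)).forall_congr_right]
  simp [quadResSym_map_ringEquiv]

end quadResSym

theorem NumberField.isGaloisGroup_ringOfIntegers (F K : Type*) [Field F] [NumberField F]
    [Field K] [NumberField K] [Algebra F K] [IsGalois F K] :
    IsGaloisGroup Gal(K/F) (𝓞 F) (𝓞 K) :=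
  IsGaloisGroup.of_isFractionRing Gal(K/F) (𝓞 F) (𝓞 K) F K

theorem NumberField.exists_ringEquiv_map_eq_of_liesOver {F K : Type*} [Field F]
    [NumberField F] [Field K] [NumberField K] [Algebra F K] [IsGalois F K]
    (p : Ideal (𝓞 F)) (P Q : Ideal (𝓞 K)) [P.IsPrime] [Q.IsPrime] [P.LiesOver p]
    [Q.LiesOver p] : ∃ e : 𝓞 K ≃+* 𝓞 K, P.map e = Q := by
  have := isGaloisGroup_ringOfIntegers F K
  obtain ⟨σ, hσ⟩ := Ideal.exists_smul_eq_of_isGaloisGroup p P Q Gal(K/F)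
  exact ⟨MulSemiringAction.toRingAut _ _ σ, hσ⟩

theorem unit_symbol_independent_of_conjugate_general
    (F : Type*) [Field F] [NumberField F]
    (𝔭₁ : Ideal (𝓞 F)) (hp1 : 𝔭₁.IsPrime)
    (hN1 : Odd (Ideal.absNorm 𝔭₁))
    (k₂ : Type*) [Field k₂] [NumberField k₂] [Algebra F k₂]
    (hdeg2 : Module.finrank F k₂ = 2)
    (𝔓₁ 𝔓₁' : Ideal (𝓞 k₂)) (hP1 : 𝔓₁.IsPrime) (hP1' : 𝔓₁'.IsPrime)
    (hsplit : Ideal.map (algebraMap (𝓞 F) (𝓞 k₂)) 𝔭₁ = 𝔓₁ * 𝔓₁')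
    : (∀ ε : (𝓞 k₂)ˣ, quadResSym k₂ 𝔓₁ (ε : 𝓞 k₂) = 1) ↔
      (∀ ε : (𝓞 k₂)ˣ, quadResSym k₂ 𝔓₁' (ε : 𝓞 k₂) = 1) := by
  have : Algebra.IsQuadraticExtension F k₂ := ⟨hdeg2⟩
  have : 𝔭₁.IsMaximal := hp1.isMaximal <| by
    rintro rfl
    simp at hN1
  have : 𝔓₁.LiesOver 𝔭₁ := Ideal.liesOver_of_map_le (hsplit ▸ Ideal.mul_le_left)
  have : 𝔓₁'.LiesOver 𝔭₁ := Ideal.liesOver_of_map_le (hsplit ▸ Ideal.mul_le_right)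
  obtain ⟨e, he⟩ := NumberField.exists_ringEquiv_map_eq_of_liesOver 𝔭₁ 𝔓₁ 𝔓₁'
  rw [← he, forall_units_quadResSym_map_ringEquiv_iff]

/-- If `𝔭₁, 𝔭₂` are primary prime ideals of odd norm in `F` (odd class number),
`𝔭₂^{h(F)} = (π₂)` with `π₂` primary, `k₂ = F(√π₂)`, and `𝔭₁ O_{k₂} = 𝔓₁ 𝔓₁'`
splits, then `(E₂/𝔓₁) = (E₂/𝔓₁')`. -/
theorem unit_symbol_independent_of_conjugate
    (F : Type*) [Field F] [NumberField F]
    (hoddF : Odd (NumberField.classNumber F))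
    (𝔭₁ 𝔭₂ : Ideal (𝓞 F)) (hp1 : 𝔭₁.IsPrime) (hp2 : 𝔭₂.IsPrime) (hne : 𝔭₁ ≠ 𝔭₂)
    (hN1 : Odd (Ideal.absNorm 𝔭₁)) (hN2 : Odd (Ideal.absNorm 𝔭₂))
    (hprim1 : IsPrimaryIdeal F 𝔭₁) (hprim2 : IsPrimaryIdeal F 𝔭₂)
    (π₂ : 𝓞 F) (hπ₂ : IsPrimaryElem F π₂)
    (hgen2 : 𝔭₂ ^ NumberField.classNumber F = Ideal.span {π₂})
    (k₂ : Type*) [Field k₂] [NumberField k₂] [Algebra F k₂]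
    (hdeg2 : Module.finrank F k₂ = 2)
    (β : k₂) (hβ : β ^ 2 = algebraMap F k₂ (algebraMap (𝓞 F) F π₂))  -- `k₂ = F(√π₂)`
    (𝔓₁ 𝔓₁' : Ideal (𝓞 k₂)) (hP1 : 𝔓₁.IsPrime) (hP1' : 𝔓₁'.IsPrime) (hPne : 𝔓₁ ≠ 𝔓₁')
    (hsplit : Ideal.map (algebraMap (𝓞 F) (𝓞 k₂)) 𝔭₁ = 𝔓₁ * 𝔓₁')
    : (∀ ε : (𝓞 k₂)ˣ, quadResSym k₂ 𝔓₁ (ε : 𝓞 k₂) = 1) ↔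
      (∀ ε : (𝓞 k₂)ˣ, quadResSym k₂ 𝔓₁' (ε : 𝓞 k₂) = 1) :=
  unit_symbol_independent_of_conjugate_general F 𝔭₁ hp1 hN1 k₂ hdeg2 𝔓₁ 𝔓₁' hP1 hP1' hsplit
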